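/- Let (𝔪, ε) be a nonempty signed symmetric multisegment in the good-parity setting, with initial sequence Δ₁ ⪰ … ⪰ Δ_l. Suppose there exists j ≥ 1 with j < l such that c(Δ_{j+1}) = 0 and c(Δ_j) = 1/2. Then the multiplicity of the segment p(Δ_{j+1}) in 𝔪# is even. -/

import Mathlib

namespace AZ

/-- A segment in doubled coordinates: the pair `(a, b)` represents the segment
`[a/2, b/2]` whose endpoints lie in `(1/2)ℤ`.  Thus the end `e(Δ)` is `Δ.2 / 2`,
the beginning `b(Δ)` is `Δ.1 / 2`, `Δ` is centered iff `Δ.1 + Δ.2 = 0`, and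
`c(Δ) = 1/2` iff `Δ.1 + Δ.2 = 2`. -/
abbrev Seg := ℤ × ℤ

namespace Seg

/-- Well-formedness of a segment: `a ≤ b` and `a ≡ b [ZMOD 2]`, i.e. `b - a ∈ 2ℕ`. -/
def WF (Δ : Seg) : Prop := Δ.1 ≤ Δ.2 ∧ Δ.1 % 2 = Δ.2 % 2

/-- The dual (contragredient) segment `Δ∨ = [−b, −a]`. -/
def dual (Δ : Seg) : Seg := (-Δ.2, -Δ.1)

/-- `Δ⁻` : the segment with its end removed. -/
def trimEnd (Δ : Seg) : Seg := (Δ.1, Δ.2 - 2)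

/-- `⁻Δ` : the segment with its beginning removed. -/
def trimBeg (Δ : Seg) : Seg := (Δ.1 + 2, Δ.2)

/-- `⁺Δ` : the segment with its beginning extended. -/
def extBeg (Δ : Seg) : Seg := (Δ.1 - 2, Δ.2)

/-- The order on segments: `[x₁,y₁] ≤ [x₂,y₂]` iff `x₁ < x₂`, or `x₁ = x₂` and `y₁ ≥ y₂`. -/
def le (Δ₁ Δ₂ : Seg) : Prop := Δ₁.1 < Δ₂.1 ∨ (Δ₁.1 = Δ₂.1 ∧ Δ₂.2 ≤ Δ₁.2)

end Seg

/-- Labels `≤0`, `=0`, `≥0` for labeled segments. -/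
inductive Label
  | le0 | eq0 | ge0
deriving DecidableEq

/-- Numerical index of a label, used to order the labels `≤0 < =0 < ≥0`. -/
def Label.idx : Label → ℕ
  | .le0 => 0
  | .eq0 => 1
  | .ge0 => 2

/-- A labeled segment: a segment together with a label. -/
abbrev LSeg := Seg × Label

namespace LSeg

/-- The order `⪯` on labeled segments: segments labeled `≤0` precede those labeled `=0`,
which precede those labeled `≥0`; for equal labels `≥0` or `≤0` one compares the segments,
and for label `=0` one compares the ends. -/
def le (Λ₁ Λ₂ : LSeg) : Prop :=
  Λ₁.2.idx < Λ₂.2.idx ∨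
    (Λ₁.2 = Λ₂.2 ∧
      if Λ₁.2 = Label.eq0 then Λ₁.1.2 ≤ Λ₂.1.2 else Seg.le Λ₁.1 Λ₂.1)

/-- The strict order `≺` on labeled segments. -/
def lt (Λ₁ Λ₂ : LSeg) : Prop := LSeg.le Λ₁ Λ₂ ∧ Λ₁ ≠ Λ₂

/-- The contragredient of a labeled segment: for a centered segment the label `≤0`
becomes `≥0` and the labels `=0`, `≥0` are kept; for a non-centered segment the
label is flipped. -/
def dual (Λ : LSeg) : LSeg :=
  (Seg.dual Λ.1,
    if Λ.1.1 + Λ.1.2 = 0 then (if Λ.2 = Label.le0 then Label.ge0 else Λ.2)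
    else
      match Λ.2 with
      | Label.le0 => Label.ge0
      | Label.eq0 => Label.eq0
      | Label.ge0 => Label.le0)

end LSeg

/-- The forced label of a non-centered segment. -/
def forcedLabel (Δ : Seg) : Label := if 0 < Δ.1 + Δ.2 then Label.ge0 else Label.le0

/-- The labeling `s(𝔪)` of a multisegment: each non-centered segment gets its forced
label; a centered segment of multiplicity `m` contributes `⌊m/2⌋` copies labeled `≤0`,
`⌊m/2⌋` copies labeled `≥0`, and `m − 2⌊m/2⌋` copies labeled `=0`. -/
def smap (m : Multiset Seg) : Multiset LSeg :=
  (m.filter fun Δ => ¬ Δ.1 + Δ.2 = 0).map (fun Δ => (Δ, forcedLabel Δ)) +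
    (m.toFinset.filter fun Δ => Δ.1 + Δ.2 = 0).val.bind (fun Δ =>
      Multiset.replicate (m.count Δ / 2) (Δ, Label.le0) +
        Multiset.replicate (m.count Δ / 2) (Δ, Label.ge0) +
        Multiset.replicate (m.count Δ % 2) (Δ, Label.eq0))

/-- A labeled segment is special (the initial sequence stops there): `[0,0]` labeled
`≥0` or `=0` in the integer case; `[1/2,1/2]`, or `[−1/2,1/2]` labeled `≥0` or `=0`
with `ε([−1/2,1/2]) = −1`, in the half-integer case. -/
def Special (ε : Seg → ℤ) (Λ : LSeg) : Prop :=
  (Λ.1 = ((0 : ℤ), (0 : ℤ)) ∧ (Λ.2 = Label.ge0 ∨ Λ.2 = Label.eq0)) ∨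
    Λ.1 = ((1 : ℤ), (1 : ℤ)) ∨
      (Λ.1 = ((-1 : ℤ), (1 : ℤ)) ∧ (Λ.2 = Label.ge0 ∨ Λ.2 = Label.eq0) ∧ ε (-1, 1) = -1)

instance (ε : Seg → ℤ) (Λ : LSeg) : Decidable (Special ε Λ) := by
  unfold Special; infer_instance

/-- The condition for `next` to be a successor of `cur` in the initial sequence:
`next ≺ cur`, `e(next) = e(cur) − 1`, and opposite signs when both are centered. -/
def Succ (ε : Seg → ℤ) (cur next : LSeg) : Prop :=
  LSeg.lt next cur ∧ next.1.2 = cur.1.2 - 2 ∧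
    (cur.1.1 + cur.1.2 = 0 → next.1.1 + next.1.2 = 0 → ε next.1 = - ε cur.1)

/-- `Δ 1, …, Δ l` is the initial sequence in the algorithm for `(m, ε)`:
`Δ 1` is the `⪯`-largest element of `s(m)` with maximal end; recursively,
`Δ (j+1)` is the `⪯`-largest successor of `Δ j`; the sequence stops when the
current segment is special or no successor exists. -/
structure IsInitSeq (m : Multiset Seg) (ε : Seg → ℤ) (Δ : ℕ → LSeg) (l : ℕ) : Prop where
  one_le : 1 ≤ l
  mem : ∀ j, 1 ≤ j → j ≤ l → Δ j ∈ smap m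
  first_max_end : ∀ Λ ∈ smap m, Λ.1.2 ≤ (Δ 1).1.2
  first_max : ∀ Λ ∈ smap m, Λ.1.2 = (Δ 1).1.2 → LSeg.le Λ (Δ 1)
  not_special : ∀ j, 1 ≤ j → j < l → ¬ Special ε (Δ j)
  succ : ∀ j, 1 ≤ j → j < l → Succ ε (Δ j) (Δ (j + 1))
  succ_max : ∀ j, 1 ≤ j → j < l → ∀ Λ ∈ smap m, Succ ε (Δ j) Λ → LSeg.le Λ (Δ (j + 1))
  last : Special ε (Δ l) ∨ ∀ Λ ∈ smap m, ¬ Succ ε (Δ l) Λ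

/-- The sign `ε₀`: `−1` if the sequence stopped at a special segment, `1` otherwise. -/
def eps0 (ε : Seg → ℤ) (Δ : ℕ → LSeg) (l : ℕ) : ℤ :=
  if Special ε (Δ l) then -1 else 1

/-- The number `n₀` of centered segments of `m`. -/
def nCentered (m : Multiset Seg) : ℕ := (m.filter fun Δ => Δ.1 + Δ.2 = 0).card

/-- The sign `ε₁` of the centered segment `𝔪₁` in the case `ε₀ = −1`:
`(−1)^(n₀+1)·ε([0,0])` in the integer case, `(−1)^(n₀)` in the half-integer case. -/
def epsOne (m : Multiset Seg) (ε : Seg → ℤ) (Δ : ℕ → LSeg) : ℤ :=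
  if (Δ 1).1.2 % 2 = 0 then (-1) ^ (nCentered m + 1) * ε (0, 0)
  else (-1) ^ nCentered m

/-- The signed multisegment `𝔪₁`: if `ε₀ = −1` it is the centered segment
`[−e(Δ₁), e(Δ₁)]` with sign `ε₁`; otherwise it is
`[e(Δ_l), e(Δ₁)] + [−e(Δ₁), −e(Δ_l)]` (non-centered segments carry sign `1`). -/
def mOne (m : Multiset Seg) (ε : Seg → ℤ) (Δ : ℕ → LSeg) (l : ℕ) : Multiset (Seg × ℤ) :=
  if Special ε (Δ l) then {((-(Δ 1).1.2, (Δ 1).1.2), epsOne m ε Δ)}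
  else {(((Δ l).1.2, (Δ 1).1.2), 1), ((-(Δ 1).1.2, -(Δ l).1.2), 1)}

/-- The labeled copies `Δ 1, …, Δ l` whose end gets removed. -/
def DEnd (Δ : ℕ → LSeg) (l : ℕ) : Multiset LSeg := (Finset.Icc 1 l).val.map Δ

/-- The labeled copies (the contragredients of the `Δ j`) whose beginning gets removed. -/
def DBeg (Δ : ℕ → LSeg) (l : ℕ) : Multiset LSeg := (DEnd Δ l).map LSeg.dual

/-- The labeled copies trimmed on both sides. -/
def DBoth (Δ : ℕ → LSeg) (l : ℕ) : Multiset LSeg := DEnd Δ l ∩ DBeg Δ l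

/-- The multisegment `𝔪#`: remove the ends of the `Δ j` and the beginnings of their
contragredients (one labeled copy each, both trims if the copy occurs in both lists),
keep all other copies, and discard empty segments. -/
def mHash (m : Multiset Seg) (Δ : ℕ → LSeg) (l : ℕ) : Multiset Seg :=
  (smap m - DEnd Δ l - (DBeg Δ l - DBoth Δ l)).map Prod.fst +
    ((DBoth Δ l).map (fun Λ => ((Λ.1.1 + 2, Λ.1.2 - 2) : Seg)) +
        (DEnd Δ l - DBoth Δ l).map (fun Λ => ((Λ.1.1, Λ.1.2 - 2) : Seg)) +
        (DBeg Δ l - DBoth Δ l).map (fun Λ => ((Λ.1.1 + 2, Λ.1.2) : Seg))).filter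
      fun Δ0 => Δ0.1 ≤ Δ0.2

/-- The trimmed segment `Λ_{i_j}#` obtained from `Δ j`. -/
def trimAt (Δ : ℕ → LSeg) (l : ℕ) (j : ℕ) : Seg :=
  if Δ j ∈ DBeg Δ l then ((Δ j).1.1 + 2, (Δ j).1.2 - 2)
  else ((Δ j).1.1, (Δ j).1.2 - 2)

/-- The sign function `ε#` on (centered) segments of `𝔪#`. -/
def epsHash (m : Multiset Seg) (ε : Seg → ℤ) (Δ : ℕ → LSeg) (l : ℕ) : Seg → ℤ :=
  fun Δ0 =>
    if ∃ j ∈ Finset.Icc 1 l, ((Δ j).1.1 + (Δ j).1.2 = 0 ∧ trimAt Δ l j = Δ0) then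
      eps0 ε Δ l * ε (Δ0.1 - 2, Δ0.2 + 2)
    else if ∃ j ∈ Finset.Icc 1 l,
        ((Δ j).1.1 + (Δ j).1.2 = 2 ∧ trimAt Δ l j = Δ0 ∧ Δ0 ∉ m) then
      eps0 ε Δ l
    else if ∃ j ∈ Finset.Icc 1 l,
        ((Δ j).1.1 + (Δ j).1.2 = 2 ∧ trimAt Δ l j = Δ0 ∧ Δ0 ∈ m) then
      -(eps0 ε Δ l) * ε Δ0
    else eps0 ε Δ l * ε Δ0

/-- The good-parity duality algorithm `AD`, as a relation between the input `(m, ε)`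
and the output signed multisegment: `AD(0) = 0` and
`AD(𝔪, ε) = (𝔪₁, ε₁) + AD(𝔪#, ε#)`. -/
inductive IsAD : Multiset Seg → (Seg → ℤ) → Multiset (Seg × ℤ) → Prop
  | zero (ε : Seg → ℤ) : IsAD 0 ε 0
  | step {m : Multiset Seg} {ε : Seg → ℤ} {Δ : ℕ → LSeg} {l : ℕ} {d : Multiset (Seg × ℤ)}
      (hm : m ≠ 0) (hseq : IsInitSeq m ε Δ l)
      (hrec : IsAD (mHash m Δ l) (epsHash m ε Δ l) d) :
      IsAD m ε (mOne m ε Δ l + d)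

/-- A valid signed symmetric multisegment in the good-parity setting. -/
structure GoodInput (m : Multiset Seg) (ε : Seg → ℤ) : Prop where
  wf : ∀ Δ0 ∈ m, Seg.WF Δ0
  symm : m.map Seg.dual = m
  parity : ∀ Δ₁ ∈ m, ∀ Δ₂ ∈ m, Δ₁.2 % 2 = Δ₂.2 % 2
  sign : ∀ Δ0, ε Δ0 = 1 ∨ ε Δ0 = -1

/-!
Write `p(Δ_{j+1}) = [-b, b]`. Then `Δ_j = [-b, b+1]` and `Δ_j∨ = [-b-1, b]`, so removing the end
of `Δ_j` and the beginning of `Δ_j∨` produces two new copies of `[-b, b]` (kept or discarded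
together); because the ends along the initial sequence drop by one at each step, no other
trimmed segment equals `[-b, b]`. Among the untouched copies, `Δ_{j+1} ≺ Δ_j` and `Δ_j` is
labeled `≥0`, so `Δ_{j+1}` is labeled `=0` or `≤0`. If `=0`, the multiplicity of `[-b, b]` in
`𝔪` is odd and only that self-dual copy is removed. If `≤0`, the multiplicity is even, since
otherwise the copy labeled `=0` would be a `⪯`-larger successor of `Δ_j`; then the copies
labeled `≤0` and `≥0` are both removed.
-/

theorem _root_.Multiset.count_map_eq_count_of_fiber {α β : Type*} [DecidableEq α]
    [DecidableEq β] {f : α → β} {s : Multiset α} {a : α} {b : β} (hab : f a = b)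
    (h : ∀ x ∈ s, f x = b → x = a) : (s.map f).count b = s.count a := by
  rw [Multiset.count_map, Multiset.count_eq_card_filter_eq]
  congr 1
  exact Multiset.filter_congr fun x hx =>
    ⟨fun hx' => (h x hx hx'.symm).symm, fun hx' => hx' ▸ hab.symm⟩

theorem count_map_fst (X : Multiset LSeg) (s : Seg) :
    (X.map Prod.fst).count s = X.count (s, .le0) + X.count (s, .eq0) + X.count (s, .ge0) := by
  induction X using Multiset.induction with
  | empty => simp
  | cons Λ X ih =>
    obtain ⟨t, lab⟩ := Λ
    simp only [Multiset.map_cons, Multiset.count_cons, ih]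
    cases lab <;> by_cases h : t = s <;> simp [h] <;> omega

theorem LSeg.dual_of_centered {Λ : LSeg} (hc : Λ.1.1 + Λ.1.2 = 0) :
    Λ.dual = (Λ.1, if Λ.2 = .le0 then .ge0 else Λ.2) := by
  rw [LSeg.dual, if_pos hc, Seg.dual]
  congr 1
  ext <;> dsimp only <;> omega

theorem snd_eq_forcedLabel_of_mem_smap {m : Multiset Seg} {Λ : LSeg} (hΛ : Λ ∈ smap m)
    (hc : Λ.1.1 + Λ.1.2 ≠ 0) : Λ.2 = forcedLabel Λ.1 := by
  rcases Multiset.mem_add.mp hΛ with h | h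
  · obtain ⟨_, -, rfl⟩ := Multiset.mem_map.mp h
    rfl
  · obtain ⟨t, ht, hΛt⟩ := Multiset.mem_bind.mp h
    have hfst : Λ.1 = t := by
      simp only [Multiset.mem_add, Multiset.mem_replicate] at hΛt
      rcases hΛt with (⟨-, rfl⟩ | ⟨-, rfl⟩) | ⟨-, rfl⟩ <;> rfl
    exact absurd (hfst ▸ (Finset.mem_filter.mp ht).2) hc

theorem count_smap_of_centered (m : Multiset Seg) {s : Seg} (hs : s.1 + s.2 = 0) (lab : Label) :
    (smap m).count (s, lab) =
      match lab with
      | .le0 | .ge0 => m.count s / 2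
      | .eq0 => m.count s % 2 := by
  have hforced : ((m.filter fun t => ¬ t.1 + t.2 = 0).map
      (fun t => (t, forcedLabel t))).count (s, lab) = 0 := by
    simp only [Multiset.count_eq_zero, Multiset.mem_map, Multiset.mem_filter, Prod.mk.injEq]
    rintro ⟨t, ⟨-, ht⟩, rfl, -⟩
    exact ht hs
  rw [smap, Multiset.count_add, hforced, zero_add, Multiset.count_bind]
  change ∑ t ∈ m.toFinset.filter (fun t => t.1 + t.2 = 0), _ = _
  rw [Finset.sum_eq_single s]
  · cases lab <;> simp [Multiset.count_replicate]
  · intro t _ hts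
    simp [Multiset.count_replicate, hts]
  · intro hs'
    have : m.count s = 0 := by simpa [hs] using hs'
    simp [this]

theorem dBeg_eq_map (Δ : ℕ → LSeg) (l : ℕ) :
    DBeg Δ l = (Finset.Icc 1 l).val.map (fun k => (Δ k).dual) :=
  Multiset.map_map _ _ _

namespace IsInitSeq

variable {m : Multiset Seg} {ε : Seg → ℤ} {Δ : ℕ → LSeg} {l j : ℕ}

theorem end_add_two_mul (hseq : IsInitSeq m ε Δ l) {k : ℕ} (hk : k ∈ Finset.Icc 1 l) :
    (Δ k).1.2 + 2 * k = (Δ 1).1.2 + 2 := by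
  obtain ⟨hk1, hkl⟩ := Finset.mem_Icc.mp hk
  induction k, hk1 using Nat.le_induction with
  | base => ring
  | succ k hk1 ih =>
    have hend := (hseq.succ k hk1 (by omega)).2.1
    push_cast
    linarith [ih (Finset.mem_Icc.mpr ⟨hk1, by omega⟩) (by omega)]

theorem eq_of_end_eq (hseq : IsInitSeq m ε Δ l) {k₁ k₂ : ℕ}
    (h₁ : k₁ ∈ Finset.Icc 1 l) (h₂ : k₂ ∈ Finset.Icc 1 l) (h : (Δ k₁).1.2 = (Δ k₂).1.2) :
    k₁ = k₂ := by
  have := hseq.end_add_two_mul h₁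
  have := hseq.end_add_two_mul h₂
  omega

theorem nodup_dEnd (hseq : IsInitSeq m ε Δ l) : (DEnd Δ l).Nodup :=
  (Finset.Icc 1 l).nodup.map_on fun _ h₁ _ h₂ h =>
    hseq.eq_of_end_eq h₁ h₂ (congrArg (·.1.2) h)

theorem nodup_dBeg (hseq : IsInitSeq m ε Δ l) : (DBeg Δ l).Nodup := by
  rw [dBeg_eq_map]
  exact (Finset.Icc 1 l).nodup.map_on fun _ h₁ _ h₂ h =>
    hseq.eq_of_end_eq h₁ h₂ (neg_inj.mp (congrArg (·.1.1) h))

theorem eq_of_mem_dEnd (hseq : IsInitSeq m ε Δ l) {Λ Λ' : LSeg} (h : Λ ∈ DEnd Δ l)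
    (h' : Λ' ∈ DEnd Δ l) (he : Λ.1.2 = Λ'.1.2) : Λ = Λ' := by
  obtain ⟨k, hk, rfl⟩ := Multiset.mem_map.mp h
  obtain ⟨k', hk', rfl⟩ := Multiset.mem_map.mp h'
  rw [hseq.eq_of_end_eq hk hk' he]

theorem eq_of_mem_dBeg (hseq : IsInitSeq m ε Δ l) {Λ Λ' : LSeg} (h : Λ ∈ DBeg Δ l)
    (h' : Λ' ∈ DBeg Δ l) (hb : Λ.1.1 = Λ'.1.1) : Λ = Λ' := by
  rw [dBeg_eq_map] at h h'
  obtain ⟨k, hk, rfl⟩ := Multiset.mem_map.mp h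
  obtain ⟨k', hk', rfl⟩ := Multiset.mem_map.mp h'
  rw [hseq.eq_of_end_eq hk hk' (neg_inj.mp hb)]

theorem count_dEnd (hseq : IsInitSeq m ε Δ l) {k : ℕ} (hk : k ∈ Finset.Icc 1 l) {Λ : LSeg}
    (hΛ : Λ.1.2 = (Δ k).1.2) : (DEnd Δ l).count Λ = if Λ = Δ k then 1 else 0 := by
  rw [Multiset.count_eq_of_nodup hseq.nodup_dEnd]
  refine if_congr ⟨fun h => ?_, fun h => h ▸ Multiset.mem_map_of_mem _ hk⟩ rfl rfl
  exact hseq.eq_of_mem_dEnd h (Multiset.mem_map_of_mem _ hk) hΛ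

theorem count_dBeg (hseq : IsInitSeq m ε Δ l) {k : ℕ} (hk : k ∈ Finset.Icc 1 l) {Λ : LSeg}
    (hΛ : Λ.1.1 = -(Δ k).1.2) : (DBeg Δ l).count Λ = if Λ = (Δ k).dual then 1 else 0 := by
  have hmem : (Δ k).dual ∈ DBeg Δ l := Multiset.mem_map_of_mem _ (Multiset.mem_map_of_mem _ hk)
  rw [Multiset.count_eq_of_nodup hseq.nodup_dBeg]
  exact if_congr ⟨fun h => hseq.eq_of_mem_dBeg h hmem hΛ, fun h => h ▸ hmem⟩ rfl rfl

theorem fst_eq_of_half_center (hseq : IsInitSeq m ε Δ l) (hj1 : 1 ≤ j) (hjl : j < l)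
    (hc1 : (Δ (j + 1)).1.1 + (Δ (j + 1)).1.2 = 0) (hc2 : (Δ j).1.1 + (Δ j).1.2 = 2) :
    (Δ j).1 = ((Δ (j + 1)).1.1, (Δ (j + 1)).1.2 + 2) := by
  have hend := (hseq.succ j hj1 hjl).2.1
  ext <;> dsimp only <;> omega

theorem snd_eq_ge0_of_half_center (hseq : IsInitSeq m ε Δ l) (hj1 : 1 ≤ j) (hjl : j ≤ l)
    (hc2 : (Δ j).1.1 + (Δ j).1.2 = 2) : (Δ j).2 = .ge0 := by
  rw [snd_eq_forcedLabel_of_mem_smap (hseq.mem j hj1 hjl) (by omega), forcedLabel,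
    if_pos (by omega)]

theorem snd_succ_ne_ge0_of_half_center (hseq : IsInitSeq m ε Δ l) (hj1 : 1 ≤ j) (hjl : j < l)
    (hc1 : (Δ (j + 1)).1.1 + (Δ (j + 1)).1.2 = 0) (hc2 : (Δ j).1.1 + (Δ j).1.2 = 2) :
    (Δ (j + 1)).2 ≠ .ge0 := by
  intro hL
  have hlt := (hseq.succ j hj1 hjl).1.1
  have hfst := hseq.fst_eq_of_half_center hj1 hjl hc1 hc2
  rw [LSeg.le, hL, hseq.snd_eq_ge0_of_half_center hj1 hjl.le hc2, if_neg nofun, Seg.le, hfst]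
    at hlt
  simp at hlt

theorem even_count_of_snd_succ_eq_le0 (hseq : IsInitSeq m ε Δ l) (hj1 : 1 ≤ j) (hjl : j < l)
    (hc1 : (Δ (j + 1)).1.1 + (Δ (j + 1)).1.2 = 0) (hc2 : (Δ j).1.1 + (Δ j).1.2 = 2)
    (hL : (Δ (j + 1)).2 = .le0) : Even (m.count (Δ (j + 1)).1) := by
  rw [Nat.even_iff]
  by_contra hodd
  have hmem : ((Δ (j + 1)).1, Label.eq0) ∈ smap m := by
    rw [← Multiset.one_le_count_iff_mem, count_smap_of_centered m hc1 .eq0]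
    dsimp only
    omega
  have hsucc : Succ ε (Δ j) ((Δ (j + 1)).1, .eq0) := by
    have hend := (hseq.succ j hj1 hjl).2.1
    refine ⟨⟨Or.inl ?_, fun h => ?_⟩, hend, fun h _ => by omega⟩
    · rw [hseq.snd_eq_ge0_of_half_center hj1 hjl.le hc2]
      exact Nat.one_lt_two
    · have := congrArg (·.1.2) h
      simp only at this
      omega
  have hle := hseq.succ_max j hj1 hjl _ hmem hsucc
  rw [LSeg.le, hL] at hle
  simp [Label.idx] at hle

theorem not_mem_dBeg_of_half_center (hseq : IsInitSeq m ε Δ l) (hj1 : 1 ≤ j) (hjl : j < l)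
    (hc1 : (Δ (j + 1)).1.1 + (Δ (j + 1)).1.2 = 0) (hc2 : (Δ j).1.1 + (Δ j).1.2 = 2) :
    Δ j ∉ DBeg Δ l := by
  have hfst := hseq.fst_eq_of_half_center hj1 hjl hc1 hc2
  rw [← Multiset.count_eq_zero,
    hseq.count_dBeg (k := j + 1) (Finset.mem_Icc.mpr ⟨by omega, hjl⟩) (by rw [hfst]; omega),
    if_neg]
  intro h
  have := congrArg (·.1.2) h
  simp only [LSeg.dual, Seg.dual, hfst] at this
  omega

theorem dual_not_mem_dEnd_of_half_center (hseq : IsInitSeq m ε Δ l) (hj1 : 1 ≤ j) (hjl : j < l)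
    (hc1 : (Δ (j + 1)).1.1 + (Δ (j + 1)).1.2 = 0) (hc2 : (Δ j).1.1 + (Δ j).1.2 = 2) :
    (Δ j).dual ∉ DEnd Δ l := by
  have hfst := hseq.fst_eq_of_half_center hj1 hjl hc1 hc2
  rw [← Multiset.count_eq_zero,
    hseq.count_dEnd (k := j + 1) (Finset.mem_Icc.mpr ⟨by omega, hjl⟩)
      (by simp only [LSeg.dual, Seg.dual, hfst]; omega),
    if_neg]
  intro h
  have := congrArg (·.1.1) h
  simp only [LSeg.dual, Seg.dual, hfst] at this
  omega

theorem count_trimmed_of_half_center (hseq : IsInitSeq m ε Δ l) (hj1 : 1 ≤ j) (hjl : j < l)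
    (hc1 : (Δ (j + 1)).1.1 + (Δ (j + 1)).1.2 = 0) (hc2 : (Δ j).1.1 + (Δ j).1.2 = 2) :
    ((DBoth Δ l).map (fun Λ => ((Λ.1.1 + 2, Λ.1.2 - 2) : Seg)) +
        (DEnd Δ l - DBoth Δ l).map (fun Λ => ((Λ.1.1, Λ.1.2 - 2) : Seg)) +
        (DBeg Δ l - DBoth Δ l).map (fun Λ => ((Λ.1.1 + 2, Λ.1.2) : Seg))).count
      (Δ (j + 1)).1 = 2 := by
  have hj : j ∈ Finset.Icc 1 l := Finset.mem_Icc.mpr ⟨hj1, hjl.le⟩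
  have hfst := hseq.fst_eq_of_half_center hj1 hjl hc1 hc2
  have hE : Δ j ∈ DEnd Δ l := Multiset.mem_map_of_mem _ hj
  have hB : (Δ j).dual ∈ DBeg Δ l := Multiset.mem_map_of_mem _ hE
  have hboth : ((DBoth Δ l).map (fun Λ => ((Λ.1.1 + 2, Λ.1.2 - 2) : Seg))).count
      (Δ (j + 1)).1 = 0 := by
    refine Multiset.count_eq_zero.mpr fun h => ?_
    obtain ⟨Λ, hΛ, hs⟩ := Multiset.mem_map.mp h
    have hΛj := hseq.eq_of_mem_dEnd (Multiset.mem_inter.mp hΛ).1 hE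
      (by rw [hfst, ← hs]; dsimp only; omega)
    have := congrArg Prod.fst hs
    rw [hΛj, hfst] at this
    dsimp only at this
    omega
  have hend : ((DEnd Δ l - DBoth Δ l).map (fun Λ => ((Λ.1.1, Λ.1.2 - 2) : Seg))).count
      (Δ (j + 1)).1 = 1 := by
    rw [DBoth, Multiset.sub_inter, Multiset.count_map_eq_count_of_fiber
      (a := Δ j) (by rw [hfst]; simp)
      fun Λ hΛ h => hseq.eq_of_mem_dEnd (Multiset.mem_of_le (Multiset.sub_le_self _ _) hΛ) hE
        (by rw [hfst]; simp only [Prod.ext_iff] at h; omega),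
      Multiset.count_sub, Multiset.count_eq_one_of_mem hseq.nodup_dEnd hE,
      Multiset.count_eq_zero.mpr (hseq.not_mem_dBeg_of_half_center hj1 hjl hc1 hc2)]
  have hbeg : ((DBeg Δ l - DBoth Δ l).map (fun Λ => ((Λ.1.1 + 2, Λ.1.2) : Seg))).count
      (Δ (j + 1)).1 = 1 := by
    rw [DBoth, Multiset.inter_comm, Multiset.sub_inter, Multiset.count_map_eq_count_of_fiber
      (a := (Δ j).dual) (by simp only [LSeg.dual, Seg.dual, hfst]; ext <;> dsimp only <;> omega)
      fun Λ hΛ h => hseq.eq_of_mem_dBeg (Multiset.mem_of_le (Multiset.sub_le_self _ _) hΛ) hB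
        (by simp only [LSeg.dual, Seg.dual, hfst, Prod.ext_iff] at h ⊢; omega),
      Multiset.count_sub, Multiset.count_eq_one_of_mem hseq.nodup_dBeg hB,
      Multiset.count_eq_zero.mpr (hseq.dual_not_mem_dEnd_of_half_center hj1 hjl hc1 hc2)]
  rw [Multiset.count_add, Multiset.count_add, hboth, hend, hbeg]

theorem even_count_untrimmed_of_half_center (hseq : IsInitSeq m ε Δ l) (hj1 : 1 ≤ j)
    (hjl : j < l) (hc1 : (Δ (j + 1)).1.1 + (Δ (j + 1)).1.2 = 0)
    (hc2 : (Δ j).1.1 + (Δ j).1.2 = 2) :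
    Even (((smap m - DEnd Δ l - (DBeg Δ l - DBoth Δ l)).map Prod.fst).count (Δ (j + 1)).1) := by
  have hj' : j + 1 ∈ Finset.Icc 1 l := Finset.mem_Icc.mpr ⟨by omega, hjl⟩
  have hE : ∀ lab, (DEnd Δ l).count ((Δ (j + 1)).1, lab) =
      if lab = (Δ (j + 1)).2 then 1 else 0 := fun lab => by
    rw [hseq.count_dEnd (Λ := ((Δ (j + 1)).1, lab)) hj' rfl]
    simp [Prod.ext_iff, eq_comm]
  have hB : ∀ lab, (DBeg Δ l).count ((Δ (j + 1)).1, lab) =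
      if lab = (if (Δ (j + 1)).2 = .le0 then .ge0 else (Δ (j + 1)).2) then 1 else 0 := fun lab => by
    rw [hseq.count_dBeg (Λ := ((Δ (j + 1)).1, lab)) hj' (by dsimp only; omega),
      LSeg.dual_of_centered hc1]
    simp
  have hS := count_smap_of_centered m hc1
  have hmem := hseq.mem (j + 1) (by omega) hjl
  simp only [count_map_fst, DBoth, Multiset.count_sub, Multiset.count_inter, hE, hB, hS]
  rw [Nat.even_iff]
  rcases hL : (Δ (j + 1)).2 with _ | _ | _
  · have := Nat.even_iff.mp (hseq.even_count_of_snd_succ_eq_le0 hj1 hjl hc1 hc2 hL)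
    simp only [reduceCtorEq, ↓reduceIte]
    omega
  · have hodd : m.count (Δ (j + 1)).1 % 2 = 1 := by
      have h : 1 ≤ (smap m).count ((Δ (j + 1)).1, .eq0) := by
        rw [← hL]
        exact Multiset.one_le_count_iff_mem.mpr hmem
      rw [hS] at h
      dsimp only at h
      omega
    simp only [reduceCtorEq, ↓reduceIte]
    omega
  · exact absurd hL (hseq.snd_succ_ne_ge0_of_half_center hj1 hjl hc1 hc2)

end IsInitSeq

theorem stmt0_general (m : Multiset Seg) (ε : Seg → ℤ)
    (Δ : ℕ → LSeg) (l : ℕ) (hseq : IsInitSeq m ε Δ l)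
    (j : ℕ) (hj1 : 1 ≤ j) (hjl : j < l)
    (hc1 : (Δ (j + 1)).1.1 + (Δ (j + 1)).1.2 = 0)
    (hc2 : (Δ j).1.1 + (Δ j).1.2 = 2) :
    Even ((mHash m Δ l).count (Δ (j + 1)).1) := by
  have huntrimmed := hseq.even_count_untrimmed_of_half_center hj1 hjl hc1 hc2
  have htrimmed := hseq.count_trimmed_of_half_center hj1 hjl hc1 hc2
  rw [mHash, Multiset.count_add, Multiset.count_filter]
  split_ifs
  · rw [htrimmed]
    exact huntrimmed.add even_two
  · rwa [add_zero]

/-- Lemma 6.0.1: if there is `j` with `1 ≤ j < l`, `c(Δ_{j+1}) = 0`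
and `c(Δ_j) = 1/2`, then the multiplicity of `p(Δ_{j+1})` in `𝔪#` is even. -/
theorem stmt0 (m : Multiset Seg) (ε : Seg → ℤ) (hgood : GoodInput m ε) (hne : m ≠ 0)
    (Δ : ℕ → LSeg) (l : ℕ) (hseq : IsInitSeq m ε Δ l)
    (j : ℕ) (hj1 : 1 ≤ j) (hjl : j < l)
    (hc1 : (Δ (j + 1)).1.1 + (Δ (j + 1)).1.2 = 0)
    (hc2 : (Δ j).1.1 + (Δ j).1.2 = 2) :
    Even ((mHash m Δ l).count (Δ (j + 1)).1) :=
  stmt0_general m ε Δ l hseq j hj1 hjl hc1 hc2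

end AZ
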